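/- arXiv:2507.07812 — 3 statements merged into one kernel-verified Lean document; each statement's English description precedes it below -/
import Mathlib

section
/- Let Z be a Hilbert space, M and N linear operators on Z with N bounded. Let μ > 0 and suppose μI − M and μI − N are bijective (with bounded inverses on Z). Then z ∈ dom(M) satisfies (M + N)z = g if and only if z is a fixed point of the map F(z) = (μI − M)⁻¹[(μI + N)(μI − N)⁻¹(μI + M)z − ((μI + N)(μI − N)⁻¹ + I)g]. -/
/-- Fixed point characterization of `(M+N)z = g` via the Peaceman–Rachford map.
`Minv` and `Ninv` are the (given) inverses of `μI − M : dom(M) → Z` and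
`μI − N : Z → Z`. Then for `z ∈ dom(M)`:
`Mz + Nz = g` iff `z = F(z)` where
`F(z) = (μI − M)⁻¹[(μI + N)(μI − N)⁻¹(μI + M)z − ((μI + N)(μI − N)⁻¹ + I)g]`. -/
theorem stmt5 {Z : Type*} [NormedAddCommGroup Z] [InnerProductSpace ℂ Z]
    (dom : Submodule ℂ Z) (M : dom →ₗ[ℂ] Z) (N : Z →L[ℂ] Z) (g : Z)
    (μ : ℝ) (hμ : 0 < μ)
    (Minv : Z → dom)
    (hMinv : ∀ y : Z, (μ : ℂ) • ((Minv y : dom) : Z) - M (Minv y) = y)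
    (hMinv' : ∀ x : dom, Minv ((μ : ℂ) • (x : Z) - M x) = x)
    (Ninv : Z → Z)
    (hNinv : ∀ y : Z, (μ : ℂ) • (Ninv y) - N (Ninv y) = y)
    (hNinv' : ∀ x : Z, Ninv ((μ : ℂ) • x - N x) = x)
    (z : dom) :
    M z + N z = g ↔
      z = Minv (((μ : ℂ) • Ninv ((μ : ℂ) • (z : Z) + M z)
            + N (Ninv ((μ : ℂ) • (z : Z) + M z)))
          - (((μ : ℂ) • Ninv g + N (Ninv g)) + g)) := by
  set a := Ninv g with ha
  set w := Ninv ((μ : ℂ) • (z : Z) + M z) with hwdef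
  have hNa : (μ : ℂ) • a - N a = g := hNinv g
  have hNw : (μ : ℂ) • w - N w = (μ : ℂ) • (z : Z) + M z := hNinv _
  have hμ0 : (μ : ℂ) ≠ 0 := by exact_mod_cast hμ.ne'
  have hμw : (μ : ℂ) • w = ((μ : ℂ) • (z : Z) + M z) + N w := eq_add_of_sub_eq hNw
  have hμa : (μ : ℂ) • a = g + N a := eq_add_of_sub_eq hNa
  constructor
  · intro h
    -- first show w - a = z
    have hwz : w - a = (z : Z) := by
      have h1 : Ninv ((μ : ℂ) • (w - a) - N (w - a)) = w - a := hNinv' _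
      have h2 : (μ : ℂ) • (w - a) - N (w - a) = (μ : ℂ) • (z : Z) - N z := by
        have : (μ : ℂ) • (w - a) - N (w - a)
            = ((μ : ℂ) • w - N w) - ((μ : ℂ) • a - N a) := by
          rw [smul_sub, map_sub]; abel
        rw [this, hNw, hNa, ← h]; abel
      rw [h2, hNinv' (z : Z)] at h1
      exact h1.symm
    have hNw2 : N w = N a + N (z : Z) := by
      have hw2 : w = a + (z : Z) := by
        rw [← hwz]; abel
      rw [hw2, map_add]
    have hX : (((μ : ℂ) • w + N w) - (((μ : ℂ) • a + N a) + g))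
        = (μ : ℂ) • (z : Z) - M z := by
      rw [hμw, hμa, hNw2, ← h]; abel
    rw [hX, hMinv' z]
  · intro hz
    have hz' : (μ : ℂ) • (z : Z) - M z
        = ((μ : ℂ) • w + N w) - (((μ : ℂ) • a + N a) + g) := by
      conv_lhs => rw [hz]
      exact hMinv _
    rw [hμw, hμa] at hz'
    have ht2 : (M z + (N w - N a) - g) + (M z + (N w - N a) - g) = 0 := by
      calc (M z + (N w - N a) - g) + (M z + (N w - N a) - g)
          = (((((μ : ℂ) • (z : Z) + M z) + N w) + N w) - (((g + N a) + N a) + g))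
            - ((μ : ℂ) • (z : Z) - M z) := by abel
        _ = 0 := by rw [hz']; abel
    have ht : M z + (N w - N a) - g = 0 := by
      have h2 : (2 : ℂ) • (M z + (N w - N a) - g) = 0 := by
        rw [two_smul]; exact ht2
      rcases smul_eq_zero.mp h2 with h' | h'
      · norm_num at h'
      · exact h'
    have h3 : M z + (N w - N a) = g := by rwa [sub_eq_zero] at ht
    -- show w - a = z
    have hd : (μ : ℂ) • (w - a) - N (w - a) = (μ : ℂ) • (z : Z) + M z - g := by
      have : (μ : ℂ) • (w - a) - N (w - a)
          = ((μ : ℂ) • w - N w) - ((μ : ℂ) • a - N a) := by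
        rw [smul_sub, map_sub]; abel
      rw [this, hNw, hNa]
    have hNd : N (w - a) = g - M z := by
      rw [map_sub, ← h3]; abel
    have hμd : (μ : ℂ) • (w - a) = (μ : ℂ) • (z : Z) := by
      have := hd
      rw [hNd] at this
      have h4 : (μ : ℂ) • (w - a) = (μ : ℂ) • (z : Z) + M z - g + (g - M z) :=
        eq_add_of_sub_eq this
      rw [h4]; abel
    have hwz : w - a = (z : Z) := smul_right_injective Z hμ0 hμd
    rw [← h3, ← map_sub, hwz]
end

section
/- Let Z be a Hilbert space, M : dom(M) ⊆ Z → Z dissipative with μI − M bijective for μ > 0, and N ∈ L(Z) skew-symmetric. Define the Peaceman-Rachford error propagation: for fixed points z solving (M+N)z = g and iterates z^{i+1} = F(z^i) (F as in the Peaceman-Rachford iteration), set Δf^i = (μI − M)(z − z^i). Then ‖Δf^{i+1}‖² − ‖Δf^i‖² ≤ 4μ Re⟨z − z^i, M(z − z^i)⟩ ≤ 0; in particular, the sequence (‖Δf^i‖)_i is monotonically decreasing and hence convergent. -/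
/-!
The residual `Δfⁱ` is pushed forward by the Cayley transform `(μ + N)(μ − N)⁻¹` of the
skew-symmetric `N`, which is an isometry because `Re ⟪x, N x⟫ = 0`:
`Δfⁱ⁺¹ = (μ + N)(μ − N)⁻¹ (μ Δzⁱ + M Δzⁱ)` while `Δfⁱ = μ Δzⁱ − M Δzⁱ`. Hence
`‖Δfⁱ⁺¹‖² − ‖Δfⁱ‖² = ‖μ Δzⁱ + M Δzⁱ‖² − ‖μ Δzⁱ − M Δzⁱ‖² = 4 μ Re ⟪Δzⁱ, M Δzⁱ⟫`,
which is nonpositive by dissipativity.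
-/

open Filter

/-- The residual `Δfⁱ = (μI − M)(z − zⁱ)` of the Peaceman–Rachford iteration. -/
noncomputable def deltaF {Z : Type*} [NormedAddCommGroup Z] [InnerProductSpace ℂ Z]
    {dom : Submodule ℂ Z} (M : dom →ₗ[ℂ] Z) (μ : ℝ) (z : dom) (zseq : ℕ → dom)
    (i : ℕ) : Z :=
  (μ : ℂ) • ((z - zseq i : dom) : Z) - M (z - zseq i)

open RCLike

section InnerProduct

variable {𝕜 E : Type*} [RCLike 𝕜] [NormedAddCommGroup E] [InnerProductSpace 𝕜 E]

theorem norm_add_sq_sub_norm_sub_sq (x y : E) :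
    ‖x + y‖ ^ 2 - ‖x - y‖ ^ 2 = 4 * re (inner 𝕜 x y) := by
  rw [@norm_add_sq 𝕜, @norm_sub_sq 𝕜]
  ring

theorem re_inner_self_apply_eq_zero_of_skew {N : E → E}
    (hN : ∀ x y, inner 𝕜 (N x) y = -inner 𝕜 x (N y)) (x : E) :
    re (inner 𝕜 x (N x)) = 0 := by
  have h := congrArg re (hN x x)
  rw [← inner_conj_symm, conj_re, map_neg] at h
  linarith

theorem norm_smul_add_apply_eq_norm_smul_sub_apply_of_skew {N : E → E}
    (hN : ∀ x y, inner 𝕜 (N x) y = -inner 𝕜 x (N y)) (r : ℝ) (x : E) :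
    ‖(r : 𝕜) • x + N x‖ = ‖(r : 𝕜) • x - N x‖ := by
  have h := norm_add_sq_sub_norm_sub_sq (𝕜 := 𝕜) ((r : 𝕜) • x) (N x)
  rw [inner_smul_left, conj_ofReal, re_ofReal_mul, re_inner_self_apply_eq_zero_of_skew hN,
    mul_zero, mul_zero, sub_eq_zero] at h
  exact (sq_eq_sq₀ (norm_nonneg _) (norm_nonneg _)).1 h

end InnerProduct

section PeacemanRachford

variable {Z : Type*} [NormedAddCommGroup Z] [InnerProductSpace ℂ Z]
  {dom : Submodule ℂ Z} {M : dom →ₗ[ℂ] Z} {N : Z →L[ℂ] Z} {g : Z} {μ : ℝ}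
  {Minv : Z → dom} {Ninv : Z → Z} {z : dom} {zseq : ℕ → dom}

theorem deltaF_succ_eq_cayley
    (hMinv : ∀ y : Z, (μ : ℂ) • ((Minv y : dom) : Z) - M (Minv y) = y)
    (hNinv : ∀ y : Z, (μ : ℂ) • (Ninv y) - N (Ninv y) = y)
    (hz : M z + N z = g)
    (hiter : ∀ i : ℕ, zseq (i + 1) =
      Minv (((μ : ℂ) • Ninv ((μ : ℂ) • ((zseq i : dom) : Z) + M (zseq i))
            + N (Ninv ((μ : ℂ) • ((zseq i : dom) : Z) + M (zseq i))))
          - (((μ : ℂ) • Ninv g + N (Ninv g)) + g)))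
    (i : ℕ) :
    ∃ x : Z, (μ : ℂ) • x - N x = (μ : ℂ) • ((z - zseq i : dom) : Z) + M (z - zseq i) ∧
      deltaF M μ z zseq (i + 1) = (μ : ℂ) • x + N x := by
  set a := Ninv ((μ : ℂ) • ((zseq i : dom) : Z) + M (zseq i))
  set b := Ninv g
  have hNa : N a = (μ : ℂ) • a - ((μ : ℂ) • ((zseq i : dom) : Z) + M (zseq i)) := by
    rw [← hNinv ((μ : ℂ) • ((zseq i : dom) : Z) + M (zseq i))]; abel
  have hNb : N b = (μ : ℂ) • b - g := by rw [← hNinv g]; abel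
  have hNz : N z = g - M z := by rw [← hz]; abel
  have hMnext : M (zseq (i + 1)) = (μ : ℂ) • ((zseq (i + 1) : dom) : Z) -
      (((μ : ℂ) • a + N a) - (((μ : ℂ) • b + N b) + g)) := by
    rw [← hMinv (((μ : ℂ) • a + N a) - (((μ : ℂ) • b + N b) + g)), ← hiter i]; abel
  -- `(μ − N) z = μ z + M z − g` gives `(μ − N)⁻¹ (μ Δzⁱ + M Δzⁱ) = z + b − a`.
  refine ⟨b - a + z, ?_, ?_⟩
  · simp only [map_sub, map_add, smul_sub, smul_add, Submodule.coe_sub, hNa, hNb, hNz]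
    abel
  · simp only [deltaF, map_sub, map_add, smul_sub, smul_add, Submodule.coe_sub, hMnext,
      hNa, hNb, hNz]
    abel

theorem norm_deltaF_succ_sq_sub_norm_deltaF_sq
    (hskew : ∀ x y : Z, (inner ℂ (N x) y : ℂ) = -(inner ℂ x (N y) : ℂ))
    (hMinv : ∀ y : Z, (μ : ℂ) • ((Minv y : dom) : Z) - M (Minv y) = y)
    (hNinv : ∀ y : Z, (μ : ℂ) • (Ninv y) - N (Ninv y) = y)
    (hz : M z + N z = g)
    (hiter : ∀ i : ℕ, zseq (i + 1) =
      Minv (((μ : ℂ) • Ninv ((μ : ℂ) • ((zseq i : dom) : Z) + M (zseq i))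
            + N (Ninv ((μ : ℂ) • ((zseq i : dom) : Z) + M (zseq i))))
          - (((μ : ℂ) • Ninv g + N (Ninv g)) + g)))
    (i : ℕ) :
    ‖deltaF M μ z zseq (i + 1)‖ ^ 2 - ‖deltaF M μ z zseq i‖ ^ 2 =
      4 * μ * (inner ℂ (((z - zseq i : dom) : Z)) (M (z - zseq i)) : ℂ).re := by
  obtain ⟨x, hx, hnext⟩ := deltaF_succ_eq_cayley hMinv hNinv hz hiter i
  have hisometry : ‖(μ : ℂ) • x + N x‖ = ‖(μ : ℂ) • x - N x‖ :=
    norm_smul_add_apply_eq_norm_smul_sub_apply_of_skew hskew μ x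
  rw [hnext, hisometry, hx, deltaF,
    norm_add_sq_sub_norm_sub_sq (𝕜 := ℂ), inner_smul_left, Complex.conj_ofReal, re_to_complex,
    Complex.re_ofReal_mul, mul_assoc]

end PeacemanRachford

theorem stmt6_general {Z : Type*} [NormedAddCommGroup Z] [InnerProductSpace ℂ Z]
    (dom : Submodule ℂ Z) (M : dom →ₗ[ℂ] Z) (N : Z →L[ℂ] Z) (g : Z)
    (μ : ℝ) (hμ : 0 < μ)
    (hdiss : ∀ x : dom, (inner ℂ ((x : Z)) (M x) : ℂ).re ≤ 0)
    (hskew : ∀ x y : Z, (inner ℂ (N x) y : ℂ) = -(inner ℂ x (N y) : ℂ))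
    (Minv : Z → dom)
    (hMinv : ∀ y : Z, (μ : ℂ) • ((Minv y : dom) : Z) - M (Minv y) = y)
    (Ninv : Z → Z)
    (hNinv : ∀ y : Z, (μ : ℂ) • (Ninv y) - N (Ninv y) = y)
    (z : dom) (hz : M z + N z = g)
    (zseq : ℕ → dom)
    (hiter : ∀ i : ℕ, zseq (i + 1) =
      Minv (((μ : ℂ) • Ninv ((μ : ℂ) • ((zseq i : dom) : Z) + M (zseq i))
            + N (Ninv ((μ : ℂ) • ((zseq i : dom) : Z) + M (zseq i))))
          - (((μ : ℂ) • Ninv g + N (Ninv g)) + g))) :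
    (∀ i : ℕ,
        ‖deltaF M μ z zseq (i + 1)‖ ^ 2 - ‖deltaF M μ z zseq i‖ ^ 2 ≤
          4 * μ * (inner ℂ (((z - zseq i : dom) : Z)) (M (z - zseq i)) : ℂ).re ∧
        4 * μ * (inner ℂ (((z - zseq i : dom) : Z)) (M (z - zseq i)) : ℂ).re ≤ 0) ∧
      Antitone (fun i => ‖deltaF M μ z zseq i‖) ∧
      ∃ l : ℝ, Tendsto (fun i => ‖deltaF M μ z zseq i‖) atTop (nhds l) := by
  have hdecay (i : ℕ) :=
    norm_deltaF_succ_sq_sub_norm_deltaF_sq hskew hMinv hNinv hz hiter i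
  have hnonpos (i : ℕ) :
      4 * μ * (inner ℂ (((z - zseq i : dom) : Z)) (M (z - zseq i)) : ℂ).re ≤ 0 :=
    mul_nonpos_of_nonneg_of_nonpos (by positivity) (hdiss _)
  have hanti : Antitone (fun i => ‖deltaF M μ z zseq i‖) := by
    refine antitone_nat_of_succ_le fun i => (sq_le_sq₀ (norm_nonneg _) (norm_nonneg _)).1 ?_
    linarith [hdecay i, hnonpos i]
  exact ⟨fun i => ⟨(hdecay i).le, hnonpos i⟩, hanti,
    _, tendsto_atTop_ciInf hanti ⟨0, by rintro _ ⟨i, rfl⟩; exact norm_nonneg _⟩⟩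

/-- Peaceman–Rachford error decay: if `M` is dissipative with `μI − M` bijective,
`N` is bounded skew-symmetric, `z` solves `(M+N)z = g`, and `zⁱ⁺¹ = F(zⁱ)` is the
Peaceman–Rachford iteration, then with `Δfⁱ = (μI − M)(z − zⁱ)` one has
`‖Δfⁱ⁺¹‖² − ‖Δfⁱ‖² ≤ 4μ Re⟨z − zⁱ, M(z − zⁱ)⟩ ≤ 0`; in particular `(‖Δfⁱ‖)ᵢ` is
monotonically decreasing and convergent. -/
theorem stmt6 {Z : Type*} [NormedAddCommGroup Z] [InnerProductSpace ℂ Z]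
    [CompleteSpace Z]
    (dom : Submodule ℂ Z) (M : dom →ₗ[ℂ] Z) (N : Z →L[ℂ] Z) (g : Z)
    (μ : ℝ) (hμ : 0 < μ)
    (hdiss : ∀ x : dom, (inner ℂ ((x : Z)) (M x) : ℂ).re ≤ 0)
    (hskew : ∀ x y : Z, (inner ℂ (N x) y : ℂ) = -(inner ℂ x (N y) : ℂ))
    (Minv : Z → dom)
    (hMinv : ∀ y : Z, (μ : ℂ) • ((Minv y : dom) : Z) - M (Minv y) = y)
    (hMinv' : ∀ x : dom, Minv ((μ : ℂ) • (x : Z) - M x) = x)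
    (Ninv : Z → Z)
    (hNinv : ∀ y : Z, (μ : ℂ) • (Ninv y) - N (Ninv y) = y)
    (hNinv' : ∀ x : Z, Ninv ((μ : ℂ) • x - N x) = x)
    (z : dom) (hz : M z + N z = g)
    (zseq : ℕ → dom)
    (hiter : ∀ i : ℕ, zseq (i + 1) =
      Minv (((μ : ℂ) • Ninv ((μ : ℂ) • ((zseq i : dom) : Z) + M (zseq i))
            + N (Ninv ((μ : ℂ) • ((zseq i : dom) : Z) + M (zseq i))))
          - (((μ : ℂ) • Ninv g + N (Ninv g)) + g))) :
    (∀ i : ℕ,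
        ‖deltaF M μ z zseq (i + 1)‖ ^ 2 - ‖deltaF M μ z zseq i‖ ^ 2 ≤
          4 * μ * (inner ℂ (((z - zseq i : dom) : Z)) (M (z - zseq i)) : ℂ).re ∧
        4 * μ * (inner ℂ (((z - zseq i : dom) : Z)) (M (z - zseq i)) : ℂ).re ≤ 0) ∧
      Antitone (fun i => ‖deltaF M μ z zseq i‖) ∧
      ∃ l : ℝ, Tendsto (fun i => ‖deltaF M μ z zseq i‖) atTop (nhds l) :=
  stmt6_general dom M N g μ hμ hdiss hskew Minv hMinv Ninv hNinv z hz zseq hiter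
end

section
/- Let X, U, Y be Hilbert spaces, A generate a C₀-semigroup on X, B ∈ L(U,X), C ∈ L(X,Y). On the interval [ℓ,r] consider the operator M_{[ℓ,r]} defined on pairs (x, λ, v_x, v_λ) with x ∈ H¹([ℓ,r];X) ∩ L²([ℓ,r];dom(A)), λ ∈ H¹([ℓ,r];X) ∩ L²([ℓ,r];dom(A*)), v_x, v_λ ∈ X, by M_{[ℓ,r]}(x,λ,v_x,v_λ) = (−C*Cx + λ̇ + A*λ − λ(r)δ_r + v_λδ_r, ẋ − Ax + x(ℓ)δ_ℓ − BB*λ − v_xδ_ℓ, λ(ℓ), −x(r)), acting on W = (L²([ℓ,r];X)×X) × (L²([ℓ,r];X)×X) × X × X. Then M_{[ℓ,r]} is dissipative; more precisely, Re⟨(x+x(r)δ_r, λ+λ(ℓ)δ_ℓ, v_x, v_λ), M_{[ℓ,r]}(x,λ,v_x,v_λ)⟩_W = −‖Cx‖²_{L²([ℓ,r];Y)} − ‖B*λ‖²_{L²([ℓ,r];U)} ≤ 0. -/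
open intervalIntegral MeasureTheory

/-!
Pointwise in `t`, adjointness makes the `A`- and `A*`-terms cancel, and the terms with `C*C` and
`BB*` become `-‖Cx‖²` and `-‖B*λ‖²`. What is left, `Re⟪x, λ̇⟫ + Re⟪λ, ẋ⟫`, is the derivative of
`Re⟪x, λ⟫`, and its integral `[Re⟪x, λ⟫]_ℓ^r` is cancelled exactly by the point-mass terms.
-/

open scoped InnerProductSpace
open RCLike Set Interval

namespace IntervalIntegrable

variable {𝕜 E : Type*} [RCLike 𝕜] [NormedAddCommGroup E] [InnerProductSpace 𝕜 E]
  {μ : Measure ℝ} {a b : ℝ}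

protected theorem re {f : ℝ → 𝕜} (hf : IntervalIntegrable f μ a b) :
    IntervalIntegrable (fun t => re (f t)) μ a b :=
  ⟨hf.1.re, hf.2.re⟩

theorem continuousOn_inner {f g : ℝ → E} (hf : IntervalIntegrable f μ a b)
    (hg : ContinuousOn g [[a, b]]) : IntervalIntegrable (fun t => ⟪g t, f t⟫_𝕜) μ a b := by
  rw [intervalIntegrable_iff] at hf ⊢
  obtain ⟨M, hM⟩ := isCompact_uIcc.exists_bound_of_continuousOn hg
  have hmeas := ((hg.mono Ioc_subset_Icc_self).aestronglyMeasurable measurableSet_uIoc).inner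
    hf.aestronglyMeasurable (𝕜 := 𝕜)
  refine (hf.norm.const_mul M).mono' hmeas ?_
  filter_upwards [ae_restrict_mem measurableSet_uIoc] with t ht
  calc ‖⟪g t, f t⟫_𝕜‖ ≤ ‖g t‖ * ‖f t‖ := norm_inner_le_norm _ _
    _ ≤ M * ‖f t‖ := by gcongr; exact hM t (Ioc_subset_Icc_self ht)

end IntervalIntegrable

section

variable {𝕜 X U Y : Type*} [RCLike 𝕜]
  [NormedAddCommGroup X] [InnerProductSpace 𝕜 X]

theorem integral_re_inner_add_re_inner_eq_sub_of_hasDerivAt [NormedSpace ℝ X]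
    {x lam x' lam' : ℝ → X} {a b : ℝ} (hx : ∀ t ∈ [[a, b]], HasDerivAt x (x' t) t)
    (hlam : ∀ t ∈ [[a, b]], HasDerivAt lam (lam' t) t)
    (hint : IntervalIntegrable (fun t => re ⟪x t, lam' t⟫_𝕜 + re ⟪lam t, x' t⟫_𝕜) volume a b) :
    ∫ t in a..b, (re ⟪x t, lam' t⟫_𝕜 + re ⟪lam t, x' t⟫_𝕜)
      = re ⟪x b, lam b⟫_𝕜 - re ⟪x a, lam a⟫_𝕜 := by
  refine integral_eq_sub_of_hasDerivAt (f := fun t => re ⟪x t, lam t⟫_𝕜) (fun t ht => ?_) hint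
  have h := reCLM.hasFDerivAt.comp_hasDerivAt t ((hx t ht).inner 𝕜 (hlam t ht))
  rw [inner_re_symm (lam t)]
  simpa [Function.comp_def] using h

theorem re_inner_boundary_terms (xl xr laml lamr vx vlam : X) :
    re ⟪xr, -lamr + vlam⟫_𝕜 + re ⟪laml, xl - vx⟫_𝕜 + re ⟪vx, laml⟫_𝕜 + re ⟪vlam, -xr⟫_𝕜
      = -(re ⟪xr, lamr⟫_𝕜 - re ⟪xl, laml⟫_𝕜) := by
  simp only [inner_add_right, inner_sub_right, inner_neg_right, map_add, map_sub, map_neg]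
  rw [inner_re_symm vx, inner_re_symm vlam, inner_re_symm laml]
  ring

variable [NormedAddCommGroup U] [InnerProductSpace 𝕜 U]
  [NormedAddCommGroup Y] [InnerProductSpace 𝕜 Y]
  [CompleteSpace X] [CompleteSpace U] [CompleteSpace Y]

theorem re_inner_add_re_inner_eq_sub_norm_sq (B : U →L[𝕜] X) (C : X →L[𝕜] Y)
    {x lam x' lam' p q : X} (hpq : ⟪p, lam⟫_𝕜 = ⟪x, q⟫_𝕜) :
    re ⟪x, -(C.adjoint (C x)) + lam' + q⟫_𝕜 + re ⟪lam, x' - p - B (B.adjoint lam)⟫_𝕜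
      = re ⟪x, lam'⟫_𝕜 + re ⟪lam, x'⟫_𝕜 - ‖C x‖ ^ 2 - ‖B.adjoint lam‖ ^ 2 := by
  have hC : ⟪x, C.adjoint (C x)⟫_𝕜 = ‖C x‖ ^ 2 := by
    rw [ContinuousLinearMap.adjoint_inner_right, inner_self_eq_norm_sq_to_K]
  have hB : ⟪lam, B (B.adjoint lam)⟫_𝕜 = ‖B.adjoint lam‖ ^ 2 := by
    rw [← ContinuousLinearMap.adjoint_inner_left, inner_self_eq_norm_sq_to_K]
  have hA : re ⟪lam, p⟫_𝕜 = re ⟪x, q⟫_𝕜 := by rw [inner_re_symm, hpq]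
  simp only [inner_add_right, inner_sub_right, inner_neg_right, map_add, map_sub, map_neg,
    hC, hB, hA]
  simp only [← ofReal_pow, ofReal_re]
  ring

theorem integral_re_inner_add_integral_re_inner_eq [NormedSpace ℝ X] (B : U →L[𝕜] X)
    (C : X →L[𝕜] Y) {x lam x' lam' p q : ℝ → X} {a b : ℝ}
    (hx : ∀ t ∈ [[a, b]], HasDerivAt x (x' t) t) (hlam : ∀ t ∈ [[a, b]], HasDerivAt lam (lam' t) t)
    (hx' : IntervalIntegrable x' volume a b) (hlam' : IntervalIntegrable lam' volume a b)
    (hp : IntervalIntegrable p volume a b) (hq : IntervalIntegrable q volume a b)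
    (hpq : ∀ t ∈ [[a, b]], ⟪p t, lam t⟫_𝕜 = ⟪x t, q t⟫_𝕜) :
    (∫ t in a..b, re ⟪x t, -(C.adjoint (C (x t))) + lam' t + q t⟫_𝕜)
      + ∫ t in a..b, re ⟪lam t, x' t - p t - B (B.adjoint (lam t))⟫_𝕜
      = re ⟪x b, lam b⟫_𝕜 - re ⟪x a, lam a⟫_𝕜 - (∫ t in a..b, ‖C (x t)‖ ^ 2)
        - ∫ t in a..b, ‖B.adjoint (lam t)‖ ^ 2 := by
  have hxc : ContinuousOn x [[a, b]] := fun t ht => (hx t ht).continuousAt.continuousWithinAt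
  have hlamc : ContinuousOn lam [[a, b]] := fun t ht =>
    (hlam t ht).continuousAt.continuousWithinAt
  have hCx : IntervalIntegrable (fun t => ‖C (x t)‖ ^ 2) volume a b :=
    ((C.continuous.comp_continuousOn hxc).norm.pow 2).intervalIntegrable
  have hBlam : IntervalIntegrable (fun t => ‖B.adjoint (lam t)‖ ^ 2) volume a b :=
    ((B.adjoint.continuous.comp_continuousOn hlamc).norm.pow 2).intervalIntegrable
  have hMx : IntervalIntegrable (fun t => -(C.adjoint (C (x t))) + lam' t + q t) volume a b :=
    (((C.adjoint.comp C).continuous.comp_continuousOn hxc).intervalIntegrable.neg.add hlam').add hq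
  have hMlam : IntervalIntegrable (fun t => x' t - p t - B (B.adjoint (lam t))) volume a b :=
    (hx'.sub hp).sub ((B.comp B.adjoint).continuous.comp_continuousOn hlamc).intervalIntegrable
  have hderiv : IntervalIntegrable
      (fun t => re ⟪x t, lam' t⟫_𝕜 + re ⟪lam t, x' t⟫_𝕜) volume a b :=
    (hlam'.continuousOn_inner hxc).re.add (hx'.continuousOn_inner hlamc).re
  rw [← integral_add (hMx.continuousOn_inner hxc).re (hMlam.continuousOn_inner hlamc).re,
    ← integral_re_inner_add_re_inner_eq_sub_of_hasDerivAt hx hlam hderiv,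
    ← integral_sub hderiv hCx, ← integral_sub (hderiv.sub hCx) hBlam]
  exact integral_congr fun t ht => re_inner_add_re_inner_eq_sub_norm_sq B C (hpq t ht)

end

/-- Dissipativity of the local optimality-system operator `M_{[ℓ,r]}`:
for `x` an `X`-valued function with values in `dom(A)` and derivative `x'`,
`λ` with values in `dom(A*)` and derivative `λ'`, and `v_x, v_λ ∈ X`, the
`W`-inner product of `(x + x(r)δ_r, λ + λ(ℓ)δ_ℓ, v_x, v_λ)` with
`M_{[ℓ,r]}(x, λ, v_x, v_λ) = (−C*Cx + λ̇ + A*λ − λ(r)δ_r + v_λδ_r,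
ẋ − Ax + x(ℓ)δ_ℓ − BB*λ − v_xδ_ℓ, λ(ℓ), −x(r))` has real part
`−‖Cx‖²_{L²([ℓ,r];Y)} − ‖B*λ‖²_{L²([ℓ,r];U)} ≤ 0`; in particular `M_{[ℓ,r]}` is
dissipative. -/
theorem stmt10 {X U Y : Type*}
    [NormedAddCommGroup X] [InnerProductSpace ℂ X] [CompleteSpace X]
    [NormedAddCommGroup U] [InnerProductSpace ℂ U] [CompleteSpace U]
    [NormedAddCommGroup Y] [InnerProductSpace ℂ Y] [CompleteSpace Y]
    (domA domAs : Submodule ℂ X)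
    (A : domA →ₗ[ℂ] X) (Astar : domAs →ₗ[ℂ] X)
    (hadj : ∀ (u : domA) (v : domAs),
      (inner ℂ (A u) ((v : X)) : ℂ) = (inner ℂ ((u : X)) (Astar v) : ℂ))
    (B : U →L[ℂ] X) (C : X →L[ℂ] Y)
    (ℓ r : ℝ) (hlr : ℓ < r)
    (x lam x' lam' : ℝ → X)
    (hxdom : ∀ t, x t ∈ domA) (hlamdom : ∀ t, lam t ∈ domAs)
    (hx : ∀ t ∈ Set.Icc ℓ r, HasDerivAt x (x' t) t)
    (hlam : ∀ t ∈ Set.Icc ℓ r, HasDerivAt lam (lam' t) t)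
    (hx' : IntervalIntegrable x' volume ℓ r)
    (hlam' : IntervalIntegrable lam' volume ℓ r)
    (hAx : IntervalIntegrable (fun t => A ⟨x t, hxdom t⟩) volume ℓ r)
    (hAslam : IntervalIntegrable (fun t => Astar ⟨lam t, hlamdom t⟩) volume ℓ r)
    (vx vlam : X) :
    ((∫ t in ℓ..r,
        (inner ℂ (x t)
          (-(ContinuousLinearMap.adjoint C (C (x t))) + lam' t
            + Astar ⟨lam t, hlamdom t⟩) : ℂ).re)
      + (inner ℂ (x r) (-(lam r) + vlam) : ℂ).re
      + (∫ t in ℓ..r,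
          (inner ℂ (lam t)
            (x' t - A ⟨x t, hxdom t⟩
              - B (ContinuousLinearMap.adjoint B (lam t))) : ℂ).re)
      + (inner ℂ (lam ℓ) (x ℓ - vx) : ℂ).re
      + (inner ℂ vx (lam ℓ) : ℂ).re
      + (inner ℂ vlam (-(x r)) : ℂ).re
      = -(∫ t in ℓ..r, ‖C (x t)‖ ^ 2)
        - ∫ t in ℓ..r, ‖ContinuousLinearMap.adjoint B (lam t)‖ ^ 2) ∧
    ((∫ t in ℓ..r,
        (inner ℂ (x t)
          (-(ContinuousLinearMap.adjoint C (C (x t))) + lam' t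
            + Astar ⟨lam t, hlamdom t⟩) : ℂ).re)
      + (inner ℂ (x r) (-(lam r) + vlam) : ℂ).re
      + (∫ t in ℓ..r,
          (inner ℂ (lam t)
            (x' t - A ⟨x t, hxdom t⟩
              - B (ContinuousLinearMap.adjoint B (lam t))) : ℂ).re)
      + (inner ℂ (lam ℓ) (x ℓ - vx) : ℂ).re
      + (inner ℂ vx (lam ℓ) : ℂ).re
      + (inner ℂ vlam (-(x r)) : ℂ).re ≤ 0) := by
  rw [← uIcc_of_le hlr.le] at hx hlam
  have hintegrals := integral_re_inner_add_integral_re_inner_eq B C hx hlam hx' hlam' hAx hAslam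
    fun t _ => hadj ⟨x t, hxdom t⟩ ⟨lam t, hlamdom t⟩
  have hboundary := re_inner_boundary_terms (𝕜 := ℂ) (x ℓ) (x r) (lam ℓ) (lam r) vx vlam
  simp only [re_to_complex] at hintegrals hboundary
  have hCx := integral_nonneg (μ := volume) hlr.le fun t _ => sq_nonneg ‖C (x t)‖
  have hBlam := integral_nonneg (μ := volume) hlr.le fun t _ => sq_nonneg ‖B.adjoint (lam t)‖
  exact ⟨by linarith, by linarith⟩
end
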